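/- arXiv:math/0609271 — 2 statements merged into one kernel-verified Lean document; each statement's English description precedes it below -/
import Mathlib

section
/- Let 1 ≤ m ≤ n and let (z_1,...,z_n) be complex numbers with |z_k| ≥ 1 for all k. Then max over ν = 1,...,2nm − m(m+1) + 1 of |∑_{k=1}^n z_k^ν| is at least √m. -/
/-!
Suppose `‖s_ν‖ < √m` for `1 ≤ ν ≤ N`. Let `H` be a set of `m` indices and take the
`2nm - m(m+1)` numbers `z_l * conj z_k` over ordered pairs `l ≠ k` not both outside `H`. Their
`ν`-th power sum is `‖s_ν‖² - ‖∑_{k ∉ H} z_k^ν‖² - ∑_{k ∈ H} ‖z_k‖^(2ν) < m - m = 0`, a negative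
real. But `N'` complex numbers never have their first `N' + 1` power sums all negative reals:
Newton's identities would force `(-1)^k e_k > 0` for every `k ≤ N' + 1`, whereas `e_(N'+1) = 0`.
-/

open Finset ComplexConjugate MvPolynomial
open scoped ComplexOrder

theorem Finset.sum_offDiag_mul {ι R : Type*} [CommRing R] [DecidableEq ι] (s : Finset ι)
    (f g : ι → R) :
    ∑ p ∈ s.offDiag, f p.1 * g p.2 = (∑ i ∈ s, f i) * ∑ i ∈ s, g i - ∑ i ∈ s, f i * g i := by
  rw [sum_mul_sum, ← sum_product', ← diag_union_offDiag, sum_union (disjoint_diag_offDiag s),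
    diag, sum_map]
  simp

theorem Finset.card_offDiag_sdiff_offDiag {ι : Type*} [DecidableEq ι] {s t : Finset ι}
    (hts : t ⊆ s) :
    #(s.offDiag \ t.offDiag) + #(s \ t) * (#(s \ t) + 1) = 2 * #s * #(s \ t) := by
  have ht : #t ≤ #t * #t := Nat.le_mul_self _
  have hoff : #t * #t - #t ≤ #s * #s - #s := by
    simpa only [offDiag_card] using card_le_card (offDiag_mono hts)
  have hts' : #t ≤ #s := card_le_card hts
  rw [card_sdiff_of_subset (offDiag_mono hts), offDiag_card, offDiag_card, card_sdiff_of_subset hts]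
  zify [ht, hoff, hts', Nat.le_mul_self #s]
  ring

namespace MvPolynomial

variable (σ R : Type*) [Fintype σ] [CommRing R]

theorem natCast_mul_neg_one_pow_mul_esymm (k : ℕ) :
    (k : MvPolynomial σ R) * ((-1) ^ k * esymm σ R k) =
      -∑ a ∈ antidiagonal k with a.1 < k, (-1) ^ a.1 * esymm σ R a.1 * psum σ R a.2 := by
  rw [mul_left_comm, mul_esymm_eq_sum, ← mul_assoc, ← pow_add, show k + (k + 1) = 2 * k + 1 by ring,
    pow_succ, pow_mul]
  simp

theorem esymm_eq_zero_of_card_lt {k : ℕ} (hk : Fintype.card σ < k) : esymm σ R k = 0 := by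
  rw [esymm, powersetCard_eq_empty.mpr (by simpa using hk), sum_empty]

end MvPolynomial

namespace Complex

theorem pos_of_newton_recurrence {c p : ℕ → ℂ} {K : ℕ} (hc0 : c 0 = 1)
    (hrec : ∀ k, 1 ≤ k → k ≤ K →
      (k : ℂ) * c k = -∑ a ∈ antidiagonal k with a.1 < k, c a.1 * p a.2)
    (hp : ∀ j, 1 ≤ j → j ≤ K → p j < 0) (k : ℕ) (hk : k ≤ K) : 0 < c k := by
  induction k using Nat.strong_induction_on with
  | _ k ih =>
  rcases Nat.eq_zero_or_pos k with rfl | hk0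
  · simp [hc0]
  have hsum : ∑ a ∈ antidiagonal k with a.1 < k, c a.1 * p a.2 < 0 := by
    refine sum_neg (fun a ha => ?_) ⟨(0, k), by simp [hk0]⟩
    rw [mem_filter, HasAntidiagonal.mem_antidiagonal] at ha
    exact mul_neg_of_pos_of_neg (ih _ ha.2 (by omega)) (hp _ (by omega) (by omega))
  refine pos_of_mul_pos_right (a := (k : ℂ)) ?_ (by positivity)
  rw [hrec k hk0 hk]
  exact neg_pos.mpr hsum

theorem not_forall_sum_pow_neg {ι : Type*} [Fintype ι] (u : ι → ℂ) :
    ¬ ∀ ν, 1 ≤ ν → ν ≤ Fintype.card ι + 1 → ∑ i, u i ^ ν < 0 := by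
  intro hneg
  have hpos := pos_of_newton_recurrence (c := fun k => (-1) ^ k * aeval u (esymm ι ℂ k))
    (p := fun j => aeval u (psum ι ℂ j)) (by simp [esymm_zero])
    (fun k _ _ => by simpa using congrArg (aeval u) (natCast_mul_neg_one_pow_mul_esymm ι ℂ k))
    (fun j h1 h2 => by simpa [psum] using hneg j h1 h2) _ le_rfl
  simp [esymm_eq_zero_of_card_lt ι ℂ (Nat.lt_succ_self _)] at hpos

variable {ι : Type*} [DecidableEq ι]

theorem sum_offDiag_mul_conj (s : Finset ι) (a : ι → ℂ) :
    ∑ p ∈ s.offDiag, a p.1 * conj (a p.2) =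
      ((‖∑ i ∈ s, a i‖ ^ 2 - ∑ i ∈ s, ‖a i‖ ^ 2 : ℝ) : ℂ) := by
  rw [sum_offDiag_mul s a fun i => conj (a i), ← map_sum, mul_conj]
  simp [mul_conj, normSq_eq_norm_sq]

theorem sum_offDiag_sdiff_offDiag_mul_conj {s t : Finset ι} (hts : t ⊆ s) (a : ι → ℂ) :
    ∑ p ∈ s.offDiag \ t.offDiag, a p.1 * conj (a p.2) =
      ((‖∑ i ∈ s, a i‖ ^ 2 - ‖∑ i ∈ t, a i‖ ^ 2 - ∑ i ∈ s \ t, ‖a i‖ ^ 2 : ℝ) : ℂ) := by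
  rw [sum_sdiff_eq_sub (offDiag_mono hts), sum_offDiag_mul_conj, sum_offDiag_mul_conj,
    ← sum_sdiff hts (f := fun i => ‖a i‖ ^ 2)]
  push_cast
  ring

theorem sum_offDiag_sdiff_offDiag_mul_conj_neg {s t : Finset ι} (hts : t ⊆ s) (a : ι → ℂ)
    (ha : ∀ i ∈ s \ t, 1 ≤ ‖a i‖) (hsum : ‖∑ i ∈ s, a i‖ ^ 2 < #(s \ t)) :
    ∑ p ∈ s.offDiag \ t.offDiag, a p.1 * conj (a p.2) < 0 := by
  have hcard : (#(s \ t) : ℝ) ≤ ∑ i ∈ s \ t, ‖a i‖ ^ 2 := by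
    simpa using card_nsmul_le_sum _ _ 1 fun i hi => one_le_pow₀ (ha i hi)
  rw [sum_offDiag_sdiff_offDiag_mul_conj hts, ← ofReal_zero, real_lt_real]
  linarith [sq_nonneg ‖∑ i ∈ t, a i‖]

end Complex

theorem stmt_1_general (n m : ℕ) (hmn : m ≤ n) (z : Fin n → ℂ)
    (hz : ∀ k, 1 ≤ ‖z k‖) :
    ∃ ν : ℕ, 1 ≤ ν ∧ ν ≤ 2 * n * m - m * (m + 1) + 1 ∧
      Real.sqrt m ≤ ‖∑ k, z k ^ ν‖ := by
  by_contra! hsmall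
  set H : Finset (Fin n) := univ.map (Fin.castLEEmb hmn)
  have hHc : univ \ Hᶜ = H := by simp
  have hH : #H = m := by simp [H]
  set P := (univ : Finset (Fin n)).offDiag \ Hᶜ.offDiag
  have hP : #P + m * (m + 1) = 2 * n * m := by
    simpa [hHc, hH] using card_offDiag_sdiff_offDiag (subset_univ Hᶜ)
  refine Complex.not_forall_sum_pow_neg (fun p : P => z p.1.1 * conj (z p.1.2))
    fun ν h1 h2 => ?_
  have hν := hsmall ν h1 (by rw [Fintype.card_coe] at h2; omega)
  rw [sum_coe_sort P fun p => (z p.1 * conj (z p.2)) ^ ν]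
  simp_rw [mul_pow, ← map_pow]
  refine Complex.sum_offDiag_sdiff_offDiag_mul_conj_neg (subset_univ _) (fun k => z k ^ ν)
    (fun k _ => by rw [norm_pow]; exact one_le_pow₀ (hz k)) ?_
  rwa [hHc, hH, ← Real.lt_sqrt (norm_nonneg _)]

theorem stmt_1 (n m : ℕ) (hm : 1 ≤ m) (hmn : m ≤ n) (z : Fin n → ℂ)
    (hz : ∀ k, 1 ≤ ‖z k‖) :
    ∃ ν : ℕ, 1 ≤ ν ∧ ν ≤ 2 * n * m - m * (m + 1) + 1 ∧
      Real.sqrt m ≤ ‖∑ k, z k ^ ν‖ :=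
  stmt_1_general n m hmn z hz
end

section
/- Suppose p = mn + 1 is prime, where m, n are positive integers. Then there exists an n-tuple (z_1,...,z_n) of unimodular complex numbers such that |∑_{k=1}^n z_k^ν| ≤ √(mn+1) for all ν = 1,..., mn² + n − 1. -/
/-!
Let `p = mn + 1`, let `g` generate `(ℤ/p)ˣ`, let `χ` be a multiplicative character with `χ g` a
primitive `mn`-th root of unity and `ψ` a primitive additive character, and take
`z_k = χ(g^{mk}) ψ(g^{mk})`, i.e. `w(u) = χ(u) ψ(u)` on the `n` nonzero `m`-th powers `u`.
The characters `χ^{nj}`, `j < m`, detect the `m`-th powers, which gives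
`m · ∑_k z_k^ν = ∑_{j<m} G(χ^{ν+nj}, ψ(ν ·))`. Each of these Gauss sums has norm at most `√p`
unless both of its characters are trivial, and that would force `pn ∣ ν`.
-/

open Finset

theorem sum_range_mul_ite_dvd {M : Type*} [AddCommMonoid M] {m : ℕ} (hm : 0 < m) (n : ℕ)
    (f : ℕ → M) : ∑ a ∈ range (m * n), (if m ∣ a then f a else 0) = ∑ k ∈ range n, f (m * k) := by
  have hfilter : (range (m * n)).filter (m ∣ ·) = (range n).image (m * ·) := by
    ext a
    simp only [mem_filter, mem_range, mem_image]
    constructor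
    · rintro ⟨ha, k, rfl⟩
      exact ⟨k, Nat.lt_of_mul_lt_mul_left ha, rfl⟩
    · rintro ⟨k, hk, rfl⟩
      exact ⟨Nat.mul_lt_mul_of_pos_left hk hm, dvd_mul_right m k⟩
  rw [← sum_filter, hfilter, sum_image fun a _ b _ h ↦ Nat.eq_of_mul_eq_mul_left hm h]

theorem IsPrimitiveRoot.geom_sum_pow_eq_ite {R : Type*} [CommRing R] [IsDomain R] {η : R} {m : ℕ}
    (hη : IsPrimitiveRoot η m) (a : ℕ) :
    ∑ j ∈ range m, (η ^ a) ^ j = if m ∣ a then (m : R) else 0 := by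
  split_ifs with ha
  · simp [(hη.pow_eq_one_iff_dvd a).mpr ha]
  · have hne : η ^ a ≠ 1 := (hη.pow_eq_one_iff_dvd a).not.mpr ha
    have hgeom := mul_neg_geom_sum (η ^ a) m
    rw [← pow_mul, mul_comm a m, pow_mul, hη.pow_eq_one, one_pow, sub_self] at hgeom
    exact (mul_eq_zero.mp hgeom).resolve_left (sub_ne_zero.mpr hne.symm)

section GaussSumBound

variable {F : Type*} [Field F] [Fintype F]

theorem norm_gaussSum_eq_sqrt_card {χ : MulChar F ℂ} (hχ : χ ≠ 1) {ψ : AddChar F ℂ}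
    (hψ : ψ.IsPrimitive) : ‖gaussSum χ ψ‖ = √(Fintype.card F) := by
  have h : (‖gaussSum χ ψ‖ ^ 2 : ℝ) = (Fintype.card F : ℂ) := by
    rw [← gaussSum_mul_gaussSum_eq_card hχ hψ, ← star_gaussSum_eq, Complex.star_def,
      Complex.mul_conj', Complex.ofReal_pow]
  rw [eq_comm, Real.sqrt_eq_iff_eq_sq (by positivity) (norm_nonneg _)]
  exact_mod_cast h.symm

theorem norm_gaussSum_le_sqrt_card {χ : MulChar F ℂ} {ψ : AddChar F ℂ} (h : χ ≠ 1 ∨ ψ ≠ 1) :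
    ‖gaussSum χ ψ‖ ≤ √(Fintype.card F) := by
  by_cases hψ : ψ = 1
  · subst hψ
    rw [gaussSum_one_right (h.resolve_right (not_not.mpr rfl)), norm_zero]
    positivity
  by_cases hχ : χ = 1
  · subst hχ
    rw [gaussSum_one_left hψ, norm_neg, norm_one, Real.one_le_sqrt]
    exact_mod_cast Fintype.card_pos
  · exact (norm_gaussSum_eq_sqrt_card hχ (AddChar.IsPrimitive.of_ne_one hψ)).le

end GaussSumBound

section Generator

variable {F : Type*} [Field F] [Fintype F] [DecidableEq F] {g : Fˣ}

theorem sum_eq_sum_range_orderOf_of_map_zero {M : Type*} [AddCommMonoid M]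
    (hg : ∀ x, x ∈ Subgroup.zpowers g) {f : F → M} (hf : f 0 = 0) :
    ∑ x, f x = ∑ a ∈ range (orderOf g), f ↑(g ^ a) := by
  have hinj : Set.InjOn (fun a ↦ ((g ^ a : Fˣ) : F)) (range (orderOf g)) := fun a ha b hb hab ↦
    pow_injOn_Iio_orderOf (by simpa using ha) (by simpa using hb) (Units.val_injective hab)
  rw [← sum_image hinj]
  refine (sum_subset (subset_univ _) fun x _ hx ↦ ?_).symm
  obtain rfl : x = 0 := by
    by_contra hx0
    obtain ⟨a, ha, hga⟩ := mem_image.mp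
      ((IsCyclic.image_range_orderOf hg).symm ▸ mem_univ (Units.mk0 x hx0))
    exact hx (mem_image.mpr ⟨a, ha, by simp [hga]⟩)
  exact hf

theorem gaussSum_eq_sum_range_orderOf {R : Type*} [CommRing R] [Nontrivial R]
    (hg : ∀ x, x ∈ Subgroup.zpowers g) (χ : MulChar F R) (ψ : AddChar F R) :
    gaussSum χ ψ = ∑ a ∈ range (orderOf g), χ ↑(g ^ a) * ψ ↑(g ^ a) :=
  sum_eq_sum_range_orderOf_of_map_zero hg (by rw [χ.map_zero, zero_mul])

theorem exists_mulChar_isPrimitiveRoot_apply (hg : ∀ x, x ∈ Subgroup.zpowers g)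
    {R : Type*} [CommRing R] {ζ : R} (hζ : IsPrimitiveRoot ζ (Fintype.card Fˣ)) :
    ∃ χ : MulChar F R, IsPrimitiveRoot (χ g) (Fintype.card Fˣ) := by
  let ζ' : Rˣ := (hζ.isUnit Fintype.card_pos.ne').unit
  have hζ' : ζ' ∈ rootsOfUnity (Fintype.card Fˣ) R := by
    rw [mem_rootsOfUnity, Units.ext_iff]
    simpa [ζ'] using hζ.pow_eq_one
  exact ⟨MulChar.ofRootOfUnity hζ' hg, by rw [MulChar.ofRootOfUnity_spec]; simpa [ζ'] using hζ⟩

theorem mul_sum_pow_eq_sum_gaussSum {R : Type*} [CommRing R] [IsDomain R] {m n : ℕ} (hm : 0 < m) (hg : ∀ x, x ∈ Subgroup.zpowers g)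
    (hord : orderOf g = m * n) {χ : MulChar F R} (hχ : IsPrimitiveRoot (χ g) (m * n))
    (ψ : AddChar F R) (ν : ℕ) :
    (m : R) * ∑ k ∈ range n, (χ ↑(g ^ (m * k)) * ψ ↑(g ^ (m * k))) ^ ν =
      ∑ j ∈ range m, gaussSum (χ ^ (ν + n * j)) (ψ.mulShift ν) := by
  have hη : IsPrimitiveRoot (χ g ^ n) m := hχ.pow (hord ▸ orderOf_pos g) (mul_comm m n)
  set f : ℕ → R := fun a ↦ (χ ↑(g ^ a) * ψ ↑(g ^ a)) ^ ν
  have hterm : ∀ j a, (χ ^ (ν + n * j)) ↑(g ^ a) * ψ.mulShift ν ↑(g ^ a) =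
      ((χ g ^ n) ^ a) ^ j * f a := by
    intro j a
    simp only [f, MulChar.pow_apply_coe, AddChar.mulShift_apply, ← nsmul_eq_mul,
      AddChar.map_nsmul_eq_pow, Units.val_pow_eq_pow_val, map_pow]
    ring
  calc (m : R) * ∑ k ∈ range n, f (m * k)
      = ∑ a ∈ range (m * n), (∑ j ∈ range m, ((χ g ^ n) ^ a) ^ j) * f a := by
        simp_rw [hη.geom_sum_pow_eq_ite, ite_mul, zero_mul]
        rw [sum_range_mul_ite_dvd hm, mul_sum]
    _ = ∑ j ∈ range m, ∑ a ∈ range (m * n), ((χ g ^ n) ^ a) ^ j * f a := by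
        simp_rw [sum_mul]
        exact sum_comm
    _ = ∑ j ∈ range m, gaussSum (χ ^ (ν + n * j)) (ψ.mulShift ν) := by
        simp_rw [gaussSum_eq_sum_range_orderOf hg, hord, hterm]

end Generator

theorem norm_gaussSum_pow_mulShift_le {m n : ℕ} [Fact (m * n + 1).Prime]
    {g : (ZMod (m * n + 1))ˣ} {χ : MulChar (ZMod (m * n + 1)) ℂ} (hχ : IsPrimitiveRoot (χ g) (m * n))
    {ψ : AddChar (ZMod (m * n + 1)) ℂ} (hψ : ψ.IsPrimitive) {ν : ℕ} (hν₀ : 0 < ν)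
    (hν : ν < (m * n + 1) * n) (j : ℕ) :
    ‖gaussSum (χ ^ (ν + n * j)) (ψ.mulShift ν)‖ ≤ √(m * n + 1 : ℕ) := by
  refine (norm_gaussSum_le_sqrt_card (not_and_or.mp ?_)).trans_eq (by rw [ZMod.card])
  rintro ⟨hχ₁, hψ₁⟩
  have hpν : m * n + 1 ∣ ν := by
    rw [← ZMod.natCast_eq_zero_iff]
    by_contra hν0
    exact hψ hν0 hψ₁
  have hnν : n ∣ ν := by
    have hdvd : m * n ∣ ν + n * j := by
      rw [← hχ.pow_eq_one_iff_dvd, ← MulChar.pow_apply_coe, hχ₁, MulChar.one_apply_coe]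
    exact (Nat.dvd_add_left (dvd_mul_right n j)).mp ((dvd_mul_left n m).trans hdvd)
  have hcop : Nat.Coprime (m * n + 1) n := by simp
  exact hν.not_ge (Nat.le_of_dvd hν₀ (hcop.mul_dvd_of_dvd_of_dvd hpν hnν))

theorem stmt_7 (m n : ℕ) (hm : 0 < m) (hn : 0 < n) (hp : (m * n + 1).Prime) :
    ∃ z : Fin n → ℂ, (∀ k, ‖z k‖ = 1) ∧
      ∀ ν : ℕ, 1 ≤ ν → ν ≤ m * n ^ 2 + n - 1 →
        ‖∑ k, z k ^ ν‖ ≤ Real.sqrt (m * n + 1) := by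
  have := Fact.mk hp
  have hcard : Fintype.card (ZMod (m * n + 1))ˣ = m * n := by
    rw [ZMod.card_units, Nat.add_sub_cancel]
  obtain ⟨g, hg⟩ := IsCyclic.exists_generator (α := (ZMod (m * n + 1))ˣ)
  have hord : orderOf g = m * n := by
    rw [orderOf_eq_card_of_forall_mem_zpowers hg, Nat.card_eq_fintype_card, hcard]
  obtain ⟨χ, hχ⟩ := exists_mulChar_isPrimitiveRoot_apply hg
    (Complex.isPrimitiveRoot_exp _ (by rw [hcard]; positivity))
  rw [hcard] at hχ
  let ψ := ZMod.stdAddChar (N := m * n + 1)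
  refine ⟨fun k ↦ χ ↑(g ^ (m * (k : ℕ))) * ψ ↑(g ^ (m * (k : ℕ))), fun k ↦ by simp,
    fun ν hν₁ hν₂ ↦ ?_⟩
  have hν : ν < (m * n + 1) * n := by
    have : (m * n + 1) * n = m * n ^ 2 + n := by ring
    omega
  have hbound := norm_gaussSum_pow_mulShift_le hχ (ZMod.isPrimitive_stdAddChar _) hν₁ hν
  rw [Fin.sum_univ_eq_sum_range (fun k ↦ (χ ↑(g ^ (m * k)) * ψ ↑(g ^ (m * k))) ^ ν)]
  refine le_of_mul_le_mul_left ?_ (Nat.cast_pos.mpr hm : (0 : ℝ) < m)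
  calc (m : ℝ) * ‖∑ k ∈ range n, (χ ↑(g ^ (m * k)) * ψ ↑(g ^ (m * k))) ^ ν‖
      = ‖∑ j ∈ range m, gaussSum (χ ^ (ν + n * j)) (ψ.mulShift ν)‖ := by
        rw [← mul_sum_pow_eq_sum_gaussSum hm hg hord hχ, norm_mul, Complex.norm_natCast]
    _ ≤ ∑ j ∈ range m, √(m * n + 1 : ℕ) := norm_sum_le_of_le _ fun j _ ↦ hbound j
    _ = m * √(m * n + 1) := by simp
end
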